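/- Base case of the previous lemma: for k ≥ 2, there exist k distinct points z_i = (x_i, y_i) ∈ B × F with x_1 + ⋯ + x_k = o_B, y_1 + ⋯ + y_k ≠ o_F, the y_i pairwise distinct, and all x_i ≠ o_B; for any such configuration Z, no nonzero section of O(kσ + f) vanishes on Z. -/

import Mathlib

/-!
For existence, take distinct points `e₀, …, e_{k-1}` of `B` and put `xᵢ = eᵢ - e_{i+1}` (indices
mod `k`): the sum telescopes to `0` and no term vanishes since `k ≥ 2`. For the `yᵢ`, two
consecutive windows of an injective sequence in `F` have sums differing by a nonzero element, so
one of them has nonzero sum.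

For vanishing, a nonzero section `s` vanishes exactly on `(B × Y) ∪ ({o_B} × F)` for a multiset `Y`
of size `k` with sum `o_F`. As `xᵢ ≠ o_B`, every `yᵢ` lies in `Y`; being `k` distinct elements they
exhaust `Y`, so `∑ yᵢ = ∑ Y = o_F`, a contradiction.
-/

open Function

theorem Fin.sum_sub_add_one_eq_zero {B : Type*} [AddCommGroup B] {k : ℕ} [NeZero k]
    (f : Fin k → B) : ∑ i, (f i - f (i + 1)) = 0 := by
  rw [Finset.sum_sub_distrib, sub_eq_zero]
  exact (Fintype.sum_equiv (Equiv.addRight 1) _ _ fun _ => rfl).symm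

theorem exists_fin_sum_eq_zero_forall_ne_zero (B : Type*) [AddCommGroup B] [Infinite B]
    {k : ℕ} (hk : 2 ≤ k) : ∃ x : Fin k → B, ∑ i, x i = 0 ∧ ∀ i, x i ≠ 0 := by
  obtain ⟨n, rfl⟩ := Nat.exists_eq_add_of_le' hk
  let e : Fin (n + 2) ↪ B := Fin.valEmbedding.trans (Infinite.natEmbedding B)
  refine ⟨fun i => e i - e (i + 1), Fin.sum_sub_add_one_eq_zero e, fun i => ?_⟩
  rw [sub_ne_zero, e.injective.ne_iff]
  exact (add_ne_left.2 one_ne_zero).symm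

theorem exists_injective_fin_sum_ne_zero (F : Type*) [AddCommGroup F] [Infinite F]
    {k : ℕ} (hk : k ≠ 0) : ∃ y : Fin k → F, Injective y ∧ ∑ i, y i ≠ 0 := by
  let e := Infinite.natEmbedding F
  have hwindow : ∀ t, Injective fun i : Fin k => e (i + t) := fun t i j h =>
    Fin.ext (Nat.add_right_cancel (e.injective h))
  have hdiff : ∑ i : Fin k, e (i + 1) - ∑ i : Fin k, e i ≠ 0 := by
    rw [← Finset.sum_sub_distrib, Fin.sum_univ_eq_sum_range (fun i => e (i + 1) - e i),
      Finset.sum_range_sub (fun i => e i) k, sub_ne_zero, e.injective.ne_iff]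
    exact hk
  by_cases h₀ : ∑ i : Fin k, e i = 0
  · exact ⟨_, hwindow 1, fun h₁ => hdiff (by rw [h₀, h₁, sub_zero])⟩
  · exact ⟨_, hwindow 0, h₀⟩

theorem Multiset.map_univ_eq_of_injective_of_forall_mem {ι α : Type*} [Fintype ι]
    {y : ι → α} (hy : Injective y) {Y : Multiset α} (hmem : ∀ i, y i ∈ Y)
    (hcard : Multiset.card Y = Fintype.card ι) : Finset.univ.val.map y = Y := by
  refine Multiset.eq_of_le_of_card_le ?_ (by simp [hcard])
  rw [Multiset.le_iff_subset (Finset.univ.nodup.map hy)]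
  intro a ha
  obtain ⟨i, -, rfl⟩ := Multiset.mem_map.1 ha
  exact hmem i

/-- base case of Lemma on generic vanishing: for `k ≥ 2` there
exist `k` distinct points `zᵢ = (xᵢ, yᵢ) ∈ B × F` with `x₁ + ⋯ + x_k = o_B`,
`y₁ + ⋯ + y_k ≠ o_F`, the `yᵢ` pairwise distinct and all `xᵢ ≠ o_B`; and for
any such configuration no nonzero section of `O(kσ + f)` vanishes on it.
Context (hypothesis `hdiv`): every nonzero section of `O(kσ + f)` vanishes
exactly along a divisor `⊔ᵢ (B × yᵢ) ∪ f` with `y₁ + ⋯ + y_k = o_F`. -/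
theorem statement6
    (B F : Type) [AddCommGroup B] [AddCommGroup F]
    [Infinite B] [Infinite F]
    (k : ℕ) (hk : 2 ≤ k)
    (Sec : Type) [AddCommGroup Sec] [Module ℂ Sec]
    (ev : Sec →ₗ[ℂ] (B × F → ℂ))
    (hdiv : ∀ s : Sec, s ≠ 0 → ∃ Y : Multiset F, Multiset.card Y = k ∧
      Y.sum = 0 ∧ ∀ p : B × F, ev s p = 0 ↔ (p.2 ∈ Y ∨ p.1 = 0)) :
    (∃ z : Fin k → B × F, Function.Injective z ∧
        (∑ i, (z i).1) = 0 ∧ (∑ i, (z i).2) ≠ 0 ∧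
        Function.Injective (fun i => (z i).2) ∧ ∀ i, (z i).1 ≠ 0) ∧
    (∀ z : Fin k → B × F, Function.Injective z →
        (∑ i, (z i).1) = 0 → (∑ i, (z i).2) ≠ 0 →
        Function.Injective (fun i => (z i).2) → (∀ i, (z i).1 ≠ 0) →
        ∀ s : Sec, (∀ i, ev s (z i) = 0) → s = 0) := by
  refine ⟨?_, fun z _ _ hsum_y hy hx s hvan => ?_⟩
  · obtain ⟨x, hx_sum, hx_ne⟩ := exists_fin_sum_eq_zero_forall_ne_zero B hk
    obtain ⟨y, hy_inj, hy_sum⟩ := exists_injective_fin_sum_ne_zero F (by omega : k ≠ 0)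
    exact ⟨fun i => (x i, y i), fun i j h => hy_inj (congrArg Prod.snd h), hx_sum, hy_sum,
      hy_inj, hx_ne⟩
  · by_contra hs
    obtain ⟨Y, hcard, hY_sum, hzero_iff⟩ := hdiv s hs
    have hmem : ∀ i, (z i).2 ∈ Y := fun i =>
      ((hzero_iff (z i)).1 (hvan i)).resolve_right (hx i)
    have hY : Finset.univ.val.map (fun i => (z i).2) = Y :=
      Multiset.map_univ_eq_of_injective_of_forall_mem hy hmem (by rw [hcard, Fintype.card_fin])
    exact hsum_y (by rw [← Finset.sum_map_val, hY, hY_sum])
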